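/- Let Z be a finite set in which each x ∈ Z has a weighted neighbourhood N_x (with x ∈ N_x and weights d_x(y) ∈ (0,∞) for y ∈ N_x \ {x}). For each x let D_x be the wedge ep-metric of the rays of N_x on Z (D_x(z,w) = inf over finite paths of sums of costs, where the only finite nonzero costs are d_x(y) on rays {x,y} of N_x), and let D be the amalgamated UMAP ep-metric, D(z,w) = inf over finite paths z = z₀, …, z_p = w of Σ_j min_x D_x(z_j,z_{j+1}). Then for every finite s, the canonical map π₀V(Z,N)_s → π₀V(Z,D)_s is a bijection: two points of Z are joined by a chain in which each consecutive pair {u,v} satisfies D_x(u,v) ≤ s for some x ∈ Z, if and only if they are joined by a chain with consecutive D-distances ≤ s. -/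

import Mathlib

/-
Every `D_x`-step of size `≤ s` is a `D`-step of size `≤ s`, since `D ≤ min_x D_x`. Conversely,
`Z × Z` is finite, so the costs exceeding `s` have a least value `t > s`; a chain of total cost
below `t` therefore consists of steps of cost `≤ s`, and as `Z` is finite the minimum over `x`
defining such a step is attained by some `D_x`.
-/

open scoped ENNReal

/-- The infimum of the total cost `Σⱼ c(zⱼ, zⱼ₊₁)` over all finite sequences
`z = z₀, z₁, …, z_p = w` in `Z`. -/
noncomputable def chainInf {Z : Type*} (c : Z → Z → ℝ≥0∞) (z w : Z) : ℝ≥0∞ :=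
  ⨅ (n : ℕ) (f : Fin (n + 1) → Z) (_ : f 0 = z) (_ : f (Fin.last n) = w),
    ∑ i : Fin n, c (f i.castSucc) (f i.succ)

open Classical in
/-- The cost function of the rays of the weighted neighbourhood `N_x` of `x`:
`c(u,u) = 0`, `c(u,v) = d_x(y)` if `{u,v} = {x,y}` for a ray `{x,y}`
(`y ∈ N_x \ {x}`), and `c(u,v) = ∞` otherwise. -/
noncomputable def rayCost {Z : Type*} (x : Z) (Nx : Set Z) (d : Z → ℝ≥0∞)
    (u v : Z) : ℝ≥0∞ :=
  if u = v then 0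
  else if u = x ∧ v ∈ Nx then d v
  else if v = x ∧ u ∈ Nx then d u
  else ⊤

/-- The wedge ep-metric `D_x` on `Z` of the rays of the weighted neighbourhood
`N_x` of `x`. -/
noncomputable def wedgeMetric {Z : Type*} (x : Z) (Nx : Set Z) (d : Z → ℝ≥0∞) :
    Z → Z → ℝ≥0∞ :=
  chainInf (rayCost x Nx d)

namespace Relation

theorem ReflTransGen.of_fin_chain {α : Type*} {R : α → α → Prop} :
    ∀ {n : ℕ} (f : Fin (n + 1) → α), (∀ i : Fin n, R (f i.castSucc) (f i.succ)) →
      ReflTransGen R (f 0) (f (Fin.last n))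
  | 0, _, _ => .refl
  | n + 1, f, h => by
    refine .head (by simpa using h 0) ?_
    simpa [Fin.succ_last] using
      of_fin_chain (fun i => f i.succ) fun i => by simpa only [Fin.succ_castSucc] using h i.succ

end Relation

theorem exists_le_of_iInf_le {ι α : Type*} [Finite ι] [Nonempty ι]
    [ConditionallyCompleteLinearOrder α] {g : ι → α} {s : α} (h : ⨅ i, g i ≤ s) :
    ∃ i, g i ≤ s := by
  obtain ⟨i, hi⟩ := exists_eq_ciInf_of_finite (f := g)
  exact ⟨i, hi ▸ h⟩

section chainInf

variable {Z : Type*} {c : Z → Z → ℝ≥0∞}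

theorem chainInf_le_self (c : Z → Z → ℝ≥0∞) (z w : Z) : chainInf c z w ≤ c z w := by
  refine iInf_le_of_le 1 (iInf_le_of_le ![z, w] ?_)
  refine iInf_le_of_le (by simp) (iInf_le_of_le (by simp [Fin.last]) ?_)
  simp

theorem le_chainInf_of_forall_exists_le {z w : Z} {t : ℝ≥0∞}
    (h : ∀ (n : ℕ) (f : Fin (n + 1) → Z), f 0 = z → f (Fin.last n) = w →
      ∃ i : Fin n, t ≤ c (f i.castSucc) (f i.succ)) :
    t ≤ chainInf c z w := by
  refine le_iInf fun n => le_iInf fun f => le_iInf fun hf0 => le_iInf fun hfl => ?_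
  obtain ⟨i, hi⟩ := h n f hf0 hfl
  exact hi.trans (Finset.single_le_sum (f := fun j : Fin n => c (f j.castSucc) (f j.succ))
    (fun _ _ => zero_le) (Finset.mem_univ i))

theorem reflTransGen_of_chainInf_le [Finite Z] {s : ℝ≥0∞} {z w : Z}
    (h : chainInf c z w ≤ s) : Relation.ReflTransGen (fun u v => c u v ≤ s) z w := by
  by_contra hzw
  have hzw' : s < c z w := not_le.1 fun h' => hzw (.single h')
  have : Nonempty {p : Z × Z // s < c p.1 p.2} := ⟨⟨(z, w), hzw'⟩⟩
  obtain ⟨⟨p, hp⟩, hmin⟩ := Finite.exists_min fun q : {p : Z × Z // s < c p.1 p.2} => c q.1.1 q.1.2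
  -- Every chain from `z` to `w` leaves the `≤ s`-component of `z` somewhere, at cost `> s`.
  have hp_le : c p.1 p.2 ≤ chainInf c z w := by
    refine le_chainInf_of_forall_exists_le fun n f hf0 hfl => ?_
    by_contra! hchain
    exact hzw (hf0 ▸ hfl ▸ Relation.ReflTransGen.of_fin_chain f fun i =>
      not_lt.1 fun hi => (hchain i).not_ge (hmin ⟨(f i.castSucc, f i.succ), hi⟩))
  exact (hp.trans_le hp_le).not_ge h

end chainInf

theorem pi0_umap_excision_general {Z : Type*} [Fintype Z]
    (N : Z → Set Z)
    (d : Z → Z → ℝ≥0∞)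
    (s : ℝ≥0∞) :
    ∀ z w : Z,
      Relation.ReflTransGen
          (fun u v => ∃ x : Z, wedgeMetric x (N x) (d x) u v ≤ s) z w ↔
        Relation.ReflTransGen
          (fun u v =>
            chainInf (fun a b => ⨅ x : Z, wedgeMetric x (N x) (d x) a b) u v
              ≤ s) z w := by
  intro z w
  constructor
  · refine Relation.ReflTransGen.mono (fun u v ⟨x, hx⟩ => ?_) z w
    exact (chainInf_le_self _ u v).trans ((iInf_le _ x).trans hx)
  · refine Relation.ReflTransGen.lift' id (fun u v huv => ?_) z w
    have : Nonempty Z := ⟨u⟩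
    exact Relation.ReflTransGen.mono (fun a b => exists_le_of_iInf_le) u v
      (reflTransGen_of_chainInf_le huv)

/-- Theorem 23 (Lemma 2 of [UMAP-stab]): let `Z` be a finite set with a
weighted neighbourhood `N_x` for each `x` (weights `d_x(y) ∈ (0,∞)` for
`y ∈ N_x \ {x}`).  Let `D_x` be the wedge ep-metric of the rays of `N_x`, and
let `D(z,w) = inf` over finite paths `z = z₀, …, z_p = w` of
`Σⱼ min_x D_x(zⱼ, zⱼ₊₁)` be the amalgamated UMAP ep-metric.  Then for every
finite `s`, the canonical map `π₀V(Z,N)_s → π₀V(Z,D)_s` is a bijection: two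
points are joined by a chain in which each consecutive pair `{u,v}` satisfies
`D_x(u,v) ≤ s` for some `x`, iff they are joined by a chain with consecutive
`D`-distances `≤ s`. -/
theorem pi0_umap_excision {Z : Type*} [Fintype Z]
    (N : Z → Set Z) (hmem : ∀ z, z ∈ N z)
    (d : Z → Z → ℝ≥0∞)
    (hd : ∀ x, ∀ y ∈ N x, y ≠ x → 0 < d x y ∧ d x y < ⊤)
    (s : ℝ≥0∞) (hs : s ≠ ⊤) :
    ∀ z w : Z,
      Relation.ReflTransGen
          (fun u v => ∃ x : Z, wedgeMetric x (N x) (d x) u v ≤ s) z w ↔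
        Relation.ReflTransGen
          (fun u v =>
            chainInf (fun a b => ⨅ x : Z, wedgeMetric x (N x) (d x) a b) u v
              ≤ s) z w :=
  pi0_umap_excision_general N d s
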